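/- arXiv:1103.3226 — 2 statements merged into one kernel-verified Lean document; each statement's English description precedes it below -/
import Mathlib

section
/- There exists a constant C > 0, independent of ε, such that for every ε ∈ (0,1) and every pair (u₁^ε, u₂^ε) ∈ (C²(U) ∩ C(Ū))² solving the penalized obstacle-type system, one has ‖u₁^ε‖_{L∞(Ū)} ≤ C and ‖u₂^ε‖_{L∞(Ū)} ≤ C (explicitly, max_{j} ‖u_j^ε‖_{L∞} ≤ max_{j=1,2} sup_{x ∈ Ū} |H_j(x,0)|). -/
open Set Filter
open Topology

noncomputable def lap {n : ℕ} (u : EuclideanSpace ℝ (Fin n) → ℝ) (x : EuclideanSpace ℝ (Fin n)) : ℝ :=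
  ∑ i : Fin n, fderiv ℝ (fun y => fderiv ℝ u y (EuclideanSpace.single i 1)) x
    (EuclideanSpace.single i 1)

open Topology in
/-- 1-D second derivative test: at a local max, the second derivative is nonpositive. -/
lemma sdt_max {g g' : ℝ → ℝ} {δ c : ℝ} (hδ : 0 < δ)
    (hg : ∀ t : ℝ, |t| < δ → HasDerivAt g (g' t) t)
    (hc : HasDerivAt g' c 0) (hmax : IsLocalMax g 0) : c ≤ 0 := by
  by_contra hpos
  push_neg at hpos
  have h00 : g' 0 = 0 := by
    have h1 := hmax.deriv_eq_zero
    rwa [(hg 0 (by simpa using hδ)).deriv] at h1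
  have hslope : Tendsto (slope g' 0) (𝓝[≠] 0) (𝓝 c) :=
    hasDerivAt_iff_tendsto_slope.1 hc
  have hev : ∀ᶠ t in 𝓝[≠] (0:ℝ), 0 < slope g' 0 t :=
    hslope.eventually (eventually_gt_nhds hpos)
  have hev' : ∀ᶠ t in 𝓝[>] (0:ℝ), 0 < g' t := by
    have hle : 𝓝[>] (0:ℝ) ≤ 𝓝[≠] 0 := nhdsWithin_mono _ (fun t ht => ne_of_gt ht)
    filter_upwards [hle hev, self_mem_nhdsWithin] with t ht ht'
    have h2 : 0 < g' t / t := by simpa [slope_def_field, h00] using ht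
    exact (div_pos_iff.mp h2).resolve_right
      (fun h => absurd ht' (not_lt.mpr h.2.le)) |>.1
  rw [eventually_nhdsWithin_iff] at hev'
  rcases Metric.eventually_nhds_iff.mp hev' with ⟨b, hb, hball⟩
  rcases Metric.eventually_nhds_iff.mp hmax with ⟨d, hd, hmaxd⟩
  set m : ℝ := min (min b δ) d with hm
  have hm0 : 0 < m := lt_min (lt_min hb hδ) hd
  set r : ℝ := m / 2 with hrdef
  have hr0 : 0 < r := by positivity
  have hrm : r < m := half_lt_self hm0
  have hrb : r < b := lt_of_lt_of_le hrm (le_trans (min_le_left _ _) (min_le_left _ _))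
  have hrδ : r < δ := lt_of_lt_of_le hrm (le_trans (min_le_left _ _) (min_le_right _ _))
  have hrd : r < d := lt_of_lt_of_le hrm (min_le_right _ _)
  have hmono : StrictMonoOn g (Icc 0 r) := by
    apply strictMonoOn_of_deriv_pos (convex_Icc 0 r)
    · intro t ht
      have habs : |t| < δ := by
        rw [abs_lt]; exact ⟨by linarith [ht.1], by linarith [ht.2, hrδ]⟩
      exact (hg t habs).differentiableAt.continuousAt.continuousWithinAt
    · intro t ht
      rw [interior_Icc] at ht
      have habs : |t| < δ := by
        rw [abs_lt]; exact ⟨by linarith [ht.1], by linarith [ht.2, hrδ]⟩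
      rw [(hg t habs).deriv]
      exact hball (by simpa [abs_of_pos ht.1] using lt_trans ht.2 hrb) ht.1
  have h1 : g 0 < g r := hmono ⟨le_refl 0, hr0.le⟩ ⟨hr0.le, le_refl r⟩ hr0
  have h2 : g r ≤ g 0 := hmaxd (by simpa [abs_of_pos hr0] using hrd)
  linarith

/-- At an interior local maximum of a `C²` function, the Laplacian is nonpositive. -/
lemma lap_nonpos {n : ℕ} {U : Set (EuclideanSpace ℝ (Fin n))} (hUo : IsOpen U)
    {u : EuclideanSpace ℝ (Fin n) → ℝ} (hu : ContDiffOn ℝ 2 u U)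
    {x₀ : EuclideanSpace ℝ (Fin n)} (hx : x₀ ∈ U) (hmax : IsLocalMax u x₀) :
    lap u x₀ ≤ 0 := by
  have hud : DifferentiableOn ℝ u U := hu.differentiableOn (by norm_num)
  have hf1 : ContDiffOn ℝ 1 (fun y => fderiv ℝ u y) U :=
    hu.fderiv_of_isOpen hUo (by norm_num)
  have hf1d : DifferentiableAt ℝ (fun y => fderiv ℝ u y) x₀ :=
    (hf1.differentiableOn (by norm_num)).differentiableAt (hUo.mem_nhds hx)
  obtain ⟨δ, hδ, hball⟩ := Metric.isOpen_iff.mp hUo x₀ hx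
  apply Finset.sum_nonpos
  intro i _
  set e : EuclideanSpace ℝ (Fin n) := EuclideanSpace.single i 1 with he
  have hne : ‖e‖ = 1 := by simp [he]
  set A := fderiv ℝ (fun y => fderiv ℝ u y) x₀ with hA
  have hAfd : HasFDerivAt (fun y => fderiv ℝ u y) A x₀ := hf1d.hasFDerivAt
  have happly : HasFDerivAt (fun y => fderiv ℝ u y e)
      ((ContinuousLinearMap.apply ℝ ℝ e).comp A) x₀ :=
    (ContinuousLinearMap.apply ℝ ℝ e).hasFDerivAt.comp x₀ hAfd
  set L : ℝ → EuclideanSpace ℝ (Fin n) := fun t => x₀ + t • e with hL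
  have hL0 : L 0 = x₀ := by simp [hL]
  have hLd : ∀ t : ℝ, HasDerivAt L e t := by
    intro t
    simpa [hL] using ((hasDerivAt_id t).smul_const e).const_add x₀
  have hLmem : ∀ t : ℝ, |t| < δ → L t ∈ U := by
    intro t ht
    apply hball
    simp only [Metric.mem_ball, hL]
    calc dist (x₀ + t • e) x₀ = ‖t • e‖ := by
          rw [dist_eq_norm, add_sub_cancel_left]
    _ = |t| := by rw [norm_smul, hne]; simp
    _ < δ := ht
  set g : ℝ → ℝ := fun t => u (L t) with hg
  set g' : ℝ → ℝ := fun t => fderiv ℝ u (L t) e with hg'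
  have hgd : ∀ t : ℝ, |t| < δ → HasDerivAt g (g' t) t := by
    intro t ht
    have hu' : DifferentiableAt ℝ u (L t) :=
      hud.differentiableAt (hUo.mem_nhds (hLmem t ht))
    exact hu'.hasFDerivAt.comp_hasDerivAt t (hLd t)
  have hc : HasDerivAt g' (A e e) 0 := by
    have happly0 : HasFDerivAt (fun y => fderiv ℝ u y e)
        ((ContinuousLinearMap.apply ℝ ℝ e).comp A) (L 0) := hL0.symm ▸ happly
    have h1 := happly0.comp_hasDerivAt 0 (hLd 0)
    have h2 : HasDerivAt g' (((ContinuousLinearMap.apply ℝ ℝ e).comp A) e) 0 := h1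
    simpa using h2
  have hgmax : IsLocalMax g 0 := by
    have hLt : Tendsto L (𝓝 0) (𝓝 x₀) := by
      rw [← hL0]
      exact (continuous_const.add (continuous_id.smul continuous_const)).tendsto 0
    have := hLt.eventually hmax
    simpa [IsLocalMax, IsMaxFilter, hg, hL0] using this
  have hterm : fderiv ℝ (fun y => fderiv ℝ u y e) x₀ e = A e e := by
    rw [happly.fderiv]; rfl
  rw [hterm]
  exact sdt_max hδ hgd hc hgmax

lemma lap_neg {n : ℕ} (u : EuclideanSpace ℝ (Fin n) → ℝ) (x : EuclideanSpace ℝ (Fin n)) :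
    lap (fun y => -u y) x = - lap u x := by
  unfold lap
  rw [← Finset.sum_neg_distrib]
  apply Finset.sum_congr rfl
  intro i _
  have h1 : (fun y => fderiv ℝ (fun z => -u z) y (EuclideanSpace.single i 1))
      = fun y => -(fderiv ℝ u y (EuclideanSpace.single i 1)) := by
    funext y
    rw [fderiv_fun_neg]
    simp
  rw [h1, fderiv_fun_neg]
  simp

lemma grad_zero_of_fderiv_zero {n : ℕ} {u : EuclideanSpace ℝ (Fin n) → ℝ}
    {x : EuclideanSpace ℝ (Fin n)} (h : fderiv ℝ u x = 0) : gradient u x = 0 := by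
  unfold gradient
  rw [h, map_zero]

/-- At an interior local minimum of a `C²` function, the Laplacian is nonnegative. -/
lemma lap_nonneg {n : ℕ} {U : Set (EuclideanSpace ℝ (Fin n))} (hUo : IsOpen U)
    {u : EuclideanSpace ℝ (Fin n) → ℝ} (hu : ContDiffOn ℝ 2 u U)
    {x₀ : EuclideanSpace ℝ (Fin n)} (hx : x₀ ∈ U) (hmin : IsLocalMin u x₀) :
    0 ≤ lap u x₀ := by
  have h1 : lap (fun y => -u y) x₀ ≤ 0 := lap_nonpos hUo hu.neg hx hmin.neg
  rw [lap_neg] at h1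
  linarith

theorem stmt_15
    {n : ℕ} (hn : 2 ≤ n)
    (U : Set (EuclideanSpace ℝ (Fin n))) (hUo : IsOpen U) (hUb : Bornology.IsBounded U)
    (H₁ H₂ : EuclideanSpace ℝ (Fin n) → EuclideanSpace ℝ (Fin n) → ℝ)
    (hH₁ : ContDiff ℝ (⊤ : ℕ∞) (fun q : EuclideanSpace ℝ (Fin n) × EuclideanSpace ℝ (Fin n) => H₁ q.1 q.2))
    (hH₂ : ContDiff ℝ (⊤ : ℕ∞) (fun q : EuclideanSpace ℝ (Fin n) × EuclideanSpace ℝ (Fin n) => H₂ q.1 q.2))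
    (ψ₁ ψ₂ : EuclideanSpace ℝ (Fin n) → ℝ) (hψ₁ : ContDiff ℝ (⊤ : ℕ∞) ψ₁) (hψ₂ : ContDiff ℝ (⊤ : ℕ∞) ψ₂)
    (α : ℝ) (hα : 0 < α)
    (hψ₁α : ∀ x ∈ closure U, α ≤ ψ₁ x) (hψ₂α : ∀ x ∈ closure U, α ≤ ψ₂ x)
    (γ : ℝ → ℝ) (hγ : ContDiff ℝ (⊤ : ℕ∞) γ) (hγconv : ConvexOn ℝ Set.univ γ)
    (hγnn : ∀ s, 0 ≤ γ s)
    (hγ0 : ∀ s ≤ (0:ℝ), γ s = 0) (hγpos : ∀ s, 0 < s → 0 < γ s)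
    (hγ' : ∀ s, 0 < s → 0 < deriv γ s ∧ deriv γ s ≤ 1)
    (hγtop : Tendsto γ atTop atTop)
 :
    ∃ C > (0:ℝ), ∀ ε ∈ Set.Ioo (0:ℝ) 1,
      ∀ u₁ u₂ : EuclideanSpace ℝ (Fin n) → ℝ,
        ContDiffOn ℝ 2 u₁ U → ContinuousOn u₁ (closure U) →
        ContDiffOn ℝ 2 u₂ U → ContinuousOn u₂ (closure U) →
        (∀ x ∈ U, u₁ x + H₁ x (gradient u₁ x) + γ ((u₁ x - u₂ x - ψ₁ x) / ε) = ε * lap u₁ x) →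
        (∀ x ∈ U, u₂ x + H₂ x (gradient u₂ x) + γ ((u₂ x - u₁ x - ψ₂ x) / ε) = ε * lap u₂ x) →
        (∀ x ∈ frontier U, u₁ x = 0) → (∀ x ∈ frontier U, u₂ x = 0) →
        ∀ x ∈ closure U, |u₁ x| ≤ C ∧ |u₂ x| ≤ C := by
  -- compactness of the closure
  have hK : IsCompact (closure U) :=
    Metric.isCompact_of_isClosed_isBounded isClosed_closure hUb.closure
  -- bound M on |H_j x 0| over the closure
  have hc1 : Continuous (fun x : EuclideanSpace ℝ (Fin n) => H₁ x 0) :=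
    hH₁.continuous.comp (continuous_id.prodMk continuous_const)
  have hc2 : Continuous (fun x : EuclideanSpace ℝ (Fin n) => H₂ x 0) :=
    hH₂.continuous.comp (continuous_id.prodMk continuous_const)
  obtain ⟨M₁, hM₁⟩ := hK.exists_bound_of_continuousOn hc1.continuousOn
  obtain ⟨M₂, hM₂⟩ := hK.exists_bound_of_continuousOn hc2.continuousOn
  set C : ℝ := max (max M₁ M₂) 0 + 1 with hC
  have hMC1 : ∀ x ∈ closure U, |H₁ x 0| ≤ C := by
    intro x hx
    have := hM₁ x hx
    rw [Real.norm_eq_abs] at this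
    calc |H₁ x 0| ≤ M₁ := this
    _ ≤ C := by rw [hC]; nlinarith [le_max_left (max M₁ M₂) 0, le_max_left M₁ M₂]
  have hMC2 : ∀ x ∈ closure U, |H₂ x 0| ≤ C := by
    intro x hx
    have := hM₂ x hx
    rw [Real.norm_eq_abs] at this
    calc |H₂ x 0| ≤ M₂ := this
    _ ≤ C := by rw [hC]; nlinarith [le_max_left (max M₁ M₂) 0, le_max_right M₁ M₂]
  have hCpos : 0 < C := by
    rw [hC]
    nlinarith [le_max_right (max M₁ M₂) 0]
  refine ⟨C, hCpos, ?_⟩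
  rintro ε ⟨hε0, hε1⟩ u₁ u₂ hu₁ hu₁c hu₂ hu₂c hpde₁ hpde₂ hb₁ hb₂
  rcases (closure U).eq_empty_or_nonempty with hemp | hne
  · intro x hx; rw [hemp] at hx; exact absurd hx (notMem_empty x)
  have hfr : ∀ z ∈ closure U, z ∉ U → z ∈ frontier U := by
    intro z hz hzU
    rw [hUo.frontier_eq]
    exact ⟨hz, hzU⟩
  -- upper bound
  have hmcont : ContinuousOn (fun x => max (u₁ x) (u₂ x)) (closure U) := hu₁c.sup' hu₂c
  obtain ⟨x₀, hx₀K, hx₀max⟩ := hK.exists_isMaxOn hne hmcont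
  have hub : max (u₁ x₀) (u₂ x₀) ≤ C := by
    by_cases hx₀U : x₀ ∈ U
    · rcases le_total (u₂ x₀) (u₁ x₀) with h12 | h12
      · -- u₁ has a local max at x₀
        have hloc : IsLocalMax u₁ x₀ := by
          have : ∀ᶠ y in 𝓝 x₀, u₁ y ≤ u₁ x₀ := by
            filter_upwards [hUo.mem_nhds hx₀U] with y hy
            calc u₁ y ≤ max (u₁ y) (u₂ y) := le_max_left _ _
            _ ≤ max (u₁ x₀) (u₂ x₀) := hx₀max (subset_closure hy)
            _ = u₁ x₀ := max_eq_left h12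
          exact this
        have hgz : gradient u₁ x₀ = 0 := grad_zero_of_fderiv_zero hloc.fderiv_eq_zero
        have hlap : lap u₁ x₀ ≤ 0 := lap_nonpos hUo hu₁ hx₀U hloc
        have hpde := hpde₁ x₀ hx₀U
        rw [hgz] at hpde
        have hγge := hγnn ((u₁ x₀ - u₂ x₀ - ψ₁ x₀) / ε)
        have hH := hMC1 x₀ hx₀K
        have hεlap : ε * lap u₁ x₀ ≤ 0 := mul_nonpos_of_nonneg_of_nonpos hε0.le hlap
        rw [max_eq_left h12]
        have habs : -(H₁ x₀ 0) ≤ |H₁ x₀ 0| := neg_le_abs _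
        linarith
      · have hloc : IsLocalMax u₂ x₀ := by
          have : ∀ᶠ y in 𝓝 x₀, u₂ y ≤ u₂ x₀ := by
            filter_upwards [hUo.mem_nhds hx₀U] with y hy
            calc u₂ y ≤ max (u₁ y) (u₂ y) := le_max_right _ _
            _ ≤ max (u₁ x₀) (u₂ x₀) := hx₀max (subset_closure hy)
            _ = u₂ x₀ := max_eq_right h12
          exact this
        have hgz : gradient u₂ x₀ = 0 := grad_zero_of_fderiv_zero hloc.fderiv_eq_zero
        have hlap : lap u₂ x₀ ≤ 0 := lap_nonpos hUo hu₂ hx₀U hloc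
        have hpde := hpde₂ x₀ hx₀U
        rw [hgz] at hpde
        have hγge := hγnn ((u₂ x₀ - u₁ x₀ - ψ₂ x₀) / ε)
        have hH := hMC2 x₀ hx₀K
        have hεlap : ε * lap u₂ x₀ ≤ 0 := mul_nonpos_of_nonneg_of_nonpos hε0.le hlap
        rw [max_eq_right h12]
        have habs : -(H₂ x₀ 0) ≤ |H₂ x₀ 0| := neg_le_abs _
        linarith
    · have h0 : u₁ x₀ = 0 := hb₁ x₀ (hfr x₀ hx₀K hx₀U)
      have h0' : u₂ x₀ = 0 := hb₂ x₀ (hfr x₀ hx₀K hx₀U)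
      rw [h0, h0']
      simpa using hCpos.le
  -- lower bound
  have hmcont' : ContinuousOn (fun x => min (u₁ x) (u₂ x)) (closure U) := hu₁c.inf' hu₂c
  obtain ⟨x₁, hx₁K, hx₁min⟩ := hK.exists_isMinOn hne hmcont'
  have hlb : -C ≤ min (u₁ x₁) (u₂ x₁) := by
    by_cases hx₁U : x₁ ∈ U
    · rcases le_total (u₁ x₁) (u₂ x₁) with h12 | h12
      · have hloc : IsLocalMin u₁ x₁ := by
          have : ∀ᶠ y in 𝓝 x₁, u₁ x₁ ≤ u₁ y := by
            filter_upwards [hUo.mem_nhds hx₁U] with y hy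
            calc u₁ x₁ = min (u₁ x₁) (u₂ x₁) := (min_eq_left h12).symm
            _ ≤ min (u₁ y) (u₂ y) := hx₁min (subset_closure hy)
            _ ≤ u₁ y := min_le_left _ _
          exact this
        have hgz : gradient u₁ x₁ = 0 := grad_zero_of_fderiv_zero hloc.fderiv_eq_zero
        have hlap : 0 ≤ lap u₁ x₁ := lap_nonneg hUo hu₁ hx₁U hloc
        have hpde := hpde₁ x₁ hx₁U
        rw [hgz] at hpde
        have hψ := hψ₁α x₁ hx₁K
        have hsle : (u₁ x₁ - u₂ x₁ - ψ₁ x₁) / ε ≤ 0 :=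
          div_nonpos_iff.mpr (Or.inr ⟨by linarith, hε0.le⟩)
        have hγ0' : γ ((u₁ x₁ - u₂ x₁ - ψ₁ x₁) / ε) = 0 := hγ0 _ hsle
        rw [hγ0'] at hpde
        have hH := hMC1 x₁ hx₁K
        have hεlap : 0 ≤ ε * lap u₁ x₁ := mul_nonneg hε0.le hlap
        rw [min_eq_left h12]
        have habs : H₁ x₁ 0 ≤ |H₁ x₁ 0| := le_abs_self _
        linarith
      · have hloc : IsLocalMin u₂ x₁ := by
          have : ∀ᶠ y in 𝓝 x₁, u₂ x₁ ≤ u₂ y := by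
            filter_upwards [hUo.mem_nhds hx₁U] with y hy
            calc u₂ x₁ = min (u₁ x₁) (u₂ x₁) := (min_eq_right h12).symm
            _ ≤ min (u₁ y) (u₂ y) := hx₁min (subset_closure hy)
            _ ≤ u₂ y := min_le_right _ _
          exact this
        have hgz : gradient u₂ x₁ = 0 := grad_zero_of_fderiv_zero hloc.fderiv_eq_zero
        have hlap : 0 ≤ lap u₂ x₁ := lap_nonneg hUo hu₂ hx₁U hloc
        have hpde := hpde₂ x₁ hx₁U
        rw [hgz] at hpde
        have hψ := hψ₂α x₁ hx₁K
        have hsle : (u₂ x₁ - u₁ x₁ - ψ₂ x₁) / ε ≤ 0 :=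
          div_nonpos_iff.mpr (Or.inr ⟨by linarith, hε0.le⟩)
        have hγ0' : γ ((u₂ x₁ - u₁ x₁ - ψ₂ x₁) / ε) = 0 := hγ0 _ hsle
        rw [hγ0'] at hpde
        have hH := hMC2 x₁ hx₁K
        have hεlap : 0 ≤ ε * lap u₂ x₁ := mul_nonneg hε0.le hlap
        rw [min_eq_right h12]
        have habs : H₂ x₁ 0 ≤ |H₂ x₁ 0| := le_abs_self _
        linarith
    · have h0 : u₁ x₁ = 0 := hb₁ x₁ (hfr x₁ hx₁K hx₁U)
      have h0' : u₂ x₁ = 0 := hb₂ x₁ (hfr x₁ hx₁K hx₁U)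
      rw [h0, h0']
      simpa using hCpos.le
  intro x hx
  have hxu := hx₀max hx
  have hxl := hx₁min hx
  simp only [IsMaxOn, IsMinOn] at *
  constructor
  · rw [abs_le]
    constructor
    · calc -C ≤ min (u₁ x₁) (u₂ x₁) := hlb
      _ ≤ min (u₁ x) (u₂ x) := hxl
      _ ≤ u₁ x := min_le_left _ _
    · calc u₁ x ≤ max (u₁ x) (u₂ x) := le_max_left _ _
      _ ≤ max (u₁ x₀) (u₂ x₀) := hxu
      _ ≤ C := hub
  · rw [abs_le]
    constructor
    · calc -C ≤ min (u₁ x₁) (u₂ x₁) := hlb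
      _ ≤ min (u₁ x) (u₂ x) := hxl
      _ ≤ u₂ x := min_le_right _ _
    · calc u₂ x ≤ max (u₁ x) (u₂ x) := le_max_right _ _
      _ ≤ max (u₁ x₀) (u₂ x₀) := hxu
      _ ≤ C := hub
end

section
/- Let ε > 0, let a₁, a₂: Ū → [0,∞) and b₁, b₂: Ū → ℝⁿ be continuous, and let f₁, f₂: U → ℝ be continuous with f₁, f₂ ≥ 0 in U. If z₁, z₂ ∈ C²(U) ∩ C(Ū) satisfy z₁ + b₁(x)·Dz₁ + a₁(x)(z₁ − z₂) − εΔz₁ = f₁ and z₂ + b₂(x)·Dz₂ + a₂(x)(z₂ − z₁) − εΔz₂ = f₂ in U, with z₁ = z₂ = 0 on ∂U, then z₁ ≥ 0 and z₂ ≥ 0 on Ū. -/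
/-!
The function `min z₁ z₂` attains its minimum over the compact set `Ū` at some `x₀`. On `∂U` it
vanishes. At an interior `x₀`, say with `z₁ x₀ ≤ z₂ x₀`, `z₁` itself has a local minimum, so
`Dz₁ x₀ = 0` and `Δz₁ x₀ ≥ 0` (every second directional derivative is nonnegative), and the first
equation gives `z₁ x₀ = f₁ x₀ + a₁ x₀ (z₂ x₀ - z₁ x₀) + ε Δz₁ x₀ ≥ 0`.
-/

open Set Filter

open Topology

theorem IsLocalMin.deriv_deriv_nonneg {f : ℝ → ℝ} {x₀ : ℝ} (hmin : IsLocalMin f x₀)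
    (hc : ContinuousAt f x₀) : 0 ≤ deriv (deriv f) x₀ := by
  by_contra! hneg
  -- Otherwise `x₀` is also a local maximum, so `f` is locally constant.
  have hmax : IsLocalMax f x₀ := isLocalMax_of_deriv_deriv_neg hneg hmin.deriv_eq_zero hc
  have hconst : f =ᶠ[𝓝 x₀] fun _ => f x₀ := by
    filter_upwards [hmin, hmax] with x h₁ h₂ using le_antisymm h₂ h₁
  have hzero : deriv (deriv f) x₀ = 0 := by
    simpa using hconst.deriv.deriv_eq
  exact hneg.ne hzero

section LineRestriction

variable {E : Type*} [NormedAddCommGroup E] [NormedSpace ℝ E]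

theorem HasFDerivAt.hasDerivAt_comp_add_smul {F : Type*} [NormedAddCommGroup F]
    [NormedSpace ℝ F] {f : E → F} {f' : E →L[ℝ] F} {x v : E} {t : ℝ}
    (hf : HasFDerivAt f f' (x + t • v)) : HasDerivAt (fun s : ℝ => f (x + s • v)) (f' v) t := by
  have hline : HasDerivAt (fun s : ℝ => x + s • v) v t := by
    simpa using ((hasDerivAt_id t).smul_const v).const_add x
  exact hf.comp_hasDerivAt t hline

theorem IsLocalMin.fderiv_fderiv_apply_nonneg {z : E → ℝ} {x₀ : E} (hmin : IsLocalMin z x₀)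
    (hz : ContDiffAt ℝ 2 z x₀) (v : E) :
    0 ≤ fderiv ℝ (fun y => fderiv ℝ z y v) x₀ v := by
  set φ : ℝ → ℝ := fun t => z (x₀ + t • v)
  have hline : Tendsto (fun t : ℝ => x₀ + t • v) (𝓝 0) (𝓝 x₀) :=
    Continuous.tendsto' (by fun_prop) 0 x₀ (by simp)
  have hφmin : IsLocalMin φ 0 := IsMinFilter.comp_tendsto (by rwa [zero_smul, add_zero]) hline
  have hdiff : ∀ᶠ t in 𝓝 (0 : ℝ), DifferentiableAt ℝ z (x₀ + t • v) :=
    hline.eventually <| (hz.eventually (by simp)).mono fun y hy => hy.differentiableAt two_ne_zero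
  have hderiv : deriv φ =ᶠ[𝓝 0] fun t => fderiv ℝ z (x₀ + t • v) v := by
    filter_upwards [hdiff] with t ht
    exact ht.hasFDerivAt.hasDerivAt_comp_add_smul.deriv
  have hg : DifferentiableAt ℝ (fun y => fderiv ℝ z y v) x₀ :=
    ((hz.fderiv_right le_rfl).differentiableAt one_ne_zero).clm_apply
      (differentiableAt_const v)
  have hsecond : deriv (deriv φ) 0 = fderiv ℝ (fun y => fderiv ℝ z y v) x₀ v := by
    rw [hderiv.deriv_eq]
    exact HasFDerivAt.hasDerivAt_comp_add_smul (x := x₀) (v := v) (t := 0)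
      (by rw [zero_smul, add_zero]; exact hg.hasFDerivAt) |>.deriv
  rw [← hsecond]
  exact hφmin.deriv_deriv_nonneg
    hdiff.self_of_nhds.hasFDerivAt.hasDerivAt_comp_add_smul.continuousAt

end LineRestriction

theorem IsLocalMin.lap_nonneg {n : ℕ} {z : EuclideanSpace ℝ (Fin n) → ℝ}
    {x₀ : EuclideanSpace ℝ (Fin n)} (hmin : IsLocalMin z x₀) (hz : ContDiffAt ℝ 2 z x₀) :
    0 ≤ lap z x₀ :=
  Finset.sum_nonneg fun _ _ => hmin.fderiv_fderiv_apply_nonneg hz _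

theorem IsLocalMin.nonneg_of_lap_eq {n : ℕ} {z : EuclideanSpace ℝ (Fin n) → ℝ}
    {x₀ b : EuclideanSpace ℝ (Fin n)} {ε a w f : ℝ} (hmin : IsLocalMin z x₀)
    (hz : ContDiffAt ℝ 2 z x₀) (hε : 0 ≤ ε) (ha : 0 ≤ a) (hf : 0 ≤ f) (hw : z x₀ ≤ w)
    (heq : z x₀ + inner ℝ b (gradient z x₀) + a * (z x₀ - w) - ε * lap z x₀ = f) :
    0 ≤ z x₀ := by
  have hgrad : gradient z x₀ = 0 := by
    rw [gradient, hmin.fderiv_eq_zero, map_zero]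
  rw [hgrad, inner_zero_right] at heq
  nlinarith [mul_nonneg hε (hmin.lap_nonneg hz), mul_nonneg ha (sub_nonneg.2 hw)]

theorem IsMinFilter.of_le_of_eq {α β : Type*} [Preorder β] {f g : α → β} {l : Filter α} {a : α}
    (hg : IsMinFilter g l a) (hle : ∀ x, g x ≤ f x) (heq : f a = g a) : IsMinFilter f l a :=
  hg.mono fun x hx => heq ▸ hx.trans (hle x)

theorem nonneg_on_closure_of_nonneg_at_minima {X : Type*} [TopologicalSpace X] {U : Set X}
    (hU : IsCompact (closure U)) {g : X → ℝ} (hg : ContinuousOn g (closure U))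
    (hfr : ∀ x ∈ frontier U, 0 ≤ g x)
    (hint : ∀ x ∈ interior U, IsMinOn g (closure U) x → 0 ≤ g x) :
    ∀ x ∈ closure U, 0 ≤ g x := by
  intro x hx
  obtain ⟨x₀, hx₀, hmin⟩ := hU.exists_isMinOn ⟨x, hx⟩ hg
  have hx₀nonneg : 0 ≤ g x₀ := by
    by_cases hint₀ : x₀ ∈ interior U
    · exact hint x₀ hint₀ hmin
    · exact hfr x₀ ⟨hx₀, hint₀⟩
  exact hx₀nonneg.trans (hmin hx)

theorem stmt_16_general
    {n : ℕ}
    (U : Set (EuclideanSpace ℝ (Fin n))) (hUo : IsOpen U) (hUb : Bornology.IsBounded U)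
    (ε : ℝ) (hε : 0 < ε)
    (a₁ a₂ : EuclideanSpace ℝ (Fin n) → ℝ)
    (ha₁ : ∀ x ∈ closure U, 0 ≤ a₁ x) (ha₂ : ∀ x ∈ closure U, 0 ≤ a₂ x)
    (b₁ b₂ : EuclideanSpace ℝ (Fin n) → EuclideanSpace ℝ (Fin n))
    (f₁ f₂ : EuclideanSpace ℝ (Fin n) → ℝ)
    (hf₁ : ∀ x ∈ U, 0 ≤ f₁ x) (hf₂ : ∀ x ∈ U, 0 ≤ f₂ x)
    (z₁ z₂ : EuclideanSpace ℝ (Fin n) → ℝ)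
    (hz₁2 : ContDiffOn ℝ 2 z₁ U) (hz₁c : ContinuousOn z₁ (closure U))
    (hz₂2 : ContDiffOn ℝ 2 z₂ U) (hz₂c : ContinuousOn z₂ (closure U))
    (hpde₁ : ∀ x ∈ U,
      z₁ x + (inner ℝ (b₁ x) (gradient z₁ x) : ℝ) + a₁ x * (z₁ x - z₂ x) - ε * lap z₁ x = f₁ x)
    (hpde₂ : ∀ x ∈ U,
      z₂ x + (inner ℝ (b₂ x) (gradient z₂ x) : ℝ) + a₂ x * (z₂ x - z₁ x) - ε * lap z₂ x = f₂ x)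
    (hzb₁ : ∀ x ∈ frontier U, z₁ x = 0) (hzb₂ : ∀ x ∈ frontier U, z₂ x = 0) :
    ∀ x ∈ closure U, 0 ≤ z₁ x ∧ 0 ≤ z₂ x := by
  have hmin_nonneg : ∀ x ∈ closure U, 0 ≤ min (z₁ x) (z₂ x) := by
    refine nonneg_on_closure_of_nonneg_at_minima hUb.isCompact_closure (hz₁c.inf' hz₂c)
      (fun x hx => by simp [hzb₁ x hx, hzb₂ x hx]) fun x₀ hx₀ hmin => ?_
    rw [hUo.interior_eq] at hx₀
    have hU : U ∈ 𝓝 x₀ := hUo.mem_nhds hx₀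
    have hx₀' : x₀ ∈ closure U := subset_closure hx₀
    have hlocal := hmin.isLocalMin (mem_of_superset hU subset_closure)
    rcases le_total (z₁ x₀) (z₂ x₀) with h | h
    · have hz₁min : IsLocalMin z₁ x₀ :=
        hlocal.of_le_of_eq (fun _ => min_le_left _ _) (min_eq_left h).symm
      rw [min_eq_left h]
      exact hz₁min.nonneg_of_lap_eq (hz₁2.contDiffAt hU) hε.le (ha₁ x₀ hx₀') (hf₁ x₀ hx₀) h
        (hpde₁ x₀ hx₀)
    · have hz₂min : IsLocalMin z₂ x₀ :=
        hlocal.of_le_of_eq (fun _ => min_le_right _ _) (min_eq_right h).symm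
      rw [min_eq_right h]
      exact hz₂min.nonneg_of_lap_eq (hz₂2.contDiffAt hU) hε.le (ha₂ x₀ hx₀') (hf₂ x₀ hx₀) h
        (hpde₂ x₀ hx₀)
  exact fun x hx => ⟨(hmin_nonneg x hx).trans (min_le_left _ _),
    (hmin_nonneg x hx).trans (min_le_right _ _)⟩

theorem stmt_16
    {n : ℕ} (hn : 2 ≤ n)
    (U : Set (EuclideanSpace ℝ (Fin n))) (hUo : IsOpen U) (hUb : Bornology.IsBounded U)
    (ε : ℝ) (hε : 0 < ε)
    (a₁ a₂ : EuclideanSpace ℝ (Fin n) → ℝ) (ha₁c : ContinuousOn a₁ (closure U)) (ha₂c : ContinuousOn a₂ (closure U))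
    (ha₁ : ∀ x ∈ closure U, 0 ≤ a₁ x) (ha₂ : ∀ x ∈ closure U, 0 ≤ a₂ x)
    (b₁ b₂ : EuclideanSpace ℝ (Fin n) → EuclideanSpace ℝ (Fin n)) (hb₁ : ContinuousOn b₁ (closure U)) (hb₂ : ContinuousOn b₂ (closure U))
    (f₁ f₂ : EuclideanSpace ℝ (Fin n) → ℝ) (hf₁c : ContinuousOn f₁ U) (hf₂c : ContinuousOn f₂ U)
    (hf₁ : ∀ x ∈ U, 0 ≤ f₁ x) (hf₂ : ∀ x ∈ U, 0 ≤ f₂ x)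
    (z₁ z₂ : EuclideanSpace ℝ (Fin n) → ℝ)
    (hz₁2 : ContDiffOn ℝ 2 z₁ U) (hz₁c : ContinuousOn z₁ (closure U))
    (hz₂2 : ContDiffOn ℝ 2 z₂ U) (hz₂c : ContinuousOn z₂ (closure U))
    (hpde₁ : ∀ x ∈ U,
      z₁ x + (inner ℝ (b₁ x) (gradient z₁ x) : ℝ) + a₁ x * (z₁ x - z₂ x) - ε * lap z₁ x = f₁ x)
    (hpde₂ : ∀ x ∈ U,
      z₂ x + (inner ℝ (b₂ x) (gradient z₂ x) : ℝ) + a₂ x * (z₂ x - z₁ x) - ε * lap z₂ x = f₂ x)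
    (hzb₁ : ∀ x ∈ frontier U, z₁ x = 0) (hzb₂ : ∀ x ∈ frontier U, z₂ x = 0) :
    ∀ x ∈ closure U, 0 ≤ z₁ x ∧ 0 ≤ z₂ x :=
  stmt_16_general U hUo hUb ε hε a₁ a₂ ha₁ ha₂ b₁ b₂ f₁ f₂ hf₁ hf₂ z₁ z₂ hz₁2 hz₁c hz₂2 hz₂c hpde₁
    hpde₂ hzb₁ hzb₂
end
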